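/- Let H_X and H_Z be separable Hilbert spaces over ℝ, let C be a compact, positive, self-adjoint bounded linear operator on H_X, let β ∈ (0, 1/2], let Γ : H_Z → H_X be a bounded linear operator, and set E = C^β ∘ Γ. Then for every λ > 0, ‖(C + λI)⁻¹ ∘ C ∘ E − E‖ ≤ λ^β · ‖Γ‖, where ‖·‖ denotes the operator norm. -/

import Mathlib

/-!
Write `A = C + λI`, which is invertible because `C` is positive. Since `C = A - λI`,
`A⁻¹ C E - E = -λ A⁻¹ C^β Γ`, and `λ A⁻¹ C^β` is diagonal in the eigenbasis of `C` with entries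
`λ ν^β / (ν + λ)`. These are at most `λ^β` because `ν^β ≤ (ν + λ)^β` and
`(ν + λ)^(β - 1) ≤ λ^(β - 1)`, and a diagonal operator has norm at most the supremum of its entries.
-/

open scoped InnerProductSpace

namespace HilbertBasis

variable {ι H : Type*} [NormedAddCommGroup H] [InnerProductSpace ℝ H] (e : HilbertBasis ι ℝ H)

theorem hasSum_repr_sq (x : H) : HasSum (fun i => e.repr x i ^ 2) (‖x‖ ^ 2) := by
  simpa [e.repr_apply_apply, real_inner_comm, sq, real_inner_self_eq_norm_mul_norm] using
    e.hasSum_inner_mul_inner x x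

theorem repr_apply_of_apply_eq_smul {D : H →L[ℝ] H} {d : ι → ℝ}
    (hD : ∀ k, D (e k) = d k • e k) (x : H) (i : ι) :
    e.repr (D x) i = d i * e.repr x i := by
  classical
  have hsum : HasSum (fun j => (e.repr x j * d j) • e j) (D x) := by
    simpa [hD, smul_smul] using (e.hasSum_repr x).mapL D
  have := hsum.mapL (innerSL ℝ (e i))
  simp only [map_smul, innerSL_apply_apply, orthonormal_iff_ite.mp e.orthonormal, smul_eq_mul,
    mul_ite, mul_one, mul_zero] at this
  rw [e.repr_apply_apply, this.unique (hasSum_single i fun b hb => if_neg (Ne.symm hb)), if_pos rfl,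
    mul_comm]

theorem opNorm_le_of_apply_eq_smul {D : H →L[ℝ] H} {d : ι → ℝ}
    (hD : ∀ k, D (e k) = d k • e k) {M : ℝ} (hM : 0 ≤ M) (hd : ∀ k, |d k| ≤ M) :
    ‖D‖ ≤ M := by
  refine D.opNorm_le_bound hM fun x => ?_
  have hsq : ‖D x‖ ^ 2 ≤ (M * ‖x‖) ^ 2 := by
    rw [mul_pow]
    refine hasSum_le (fun i => ?_) (e.hasSum_repr_sq (D x)) ((e.hasSum_repr_sq x).mul_left (M ^ 2))
    rw [e.repr_apply_of_apply_eq_smul hD, mul_pow]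
    gcongr ?_ * _
    exact sq_le_sq' (neg_le_of_abs_le (hd i)) (le_of_abs_le (hd i))
  exact (pow_le_pow_iff_left₀ (norm_nonneg _) (by positivity) two_ne_zero).mp hsq

end HilbertBasis

theorem mul_rpow_div_add_le_rpow {ν l β : ℝ} (hν : 0 ≤ ν) (hl : 0 < l) (hβ0 : 0 ≤ β)
    (hβ1 : β ≤ 1) : l * ν ^ β / (ν + l) ≤ l ^ β := by
  have hpos : 0 < ν + l := by linarith
  calc l * ν ^ β / (ν + l) ≤ l * (ν + l) ^ β / (ν + l) := by
        gcongr
        linarith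
    _ = l * (ν + l) ^ (β - 1) := by rw [Real.rpow_sub_one hpos.ne', mul_div_assoc]
    _ ≤ l * l ^ (β - 1) :=
        mul_le_mul_of_nonneg_left (Real.rpow_le_rpow_of_nonpos hl (by linarith) (by linarith)) hl.le
    _ = l ^ β := by rw [Real.rpow_sub_one hl.ne', mul_div_cancel₀ _ hl.ne']

namespace ContinuousLinearMap

theorem IsPositive.isUnit_add_smul_one {𝕜 E : Type*} [RCLike 𝕜] [NormedAddCommGroup E]
    [InnerProductSpace 𝕜 E] [CompleteSpace E] {T : E →L[𝕜] E} (hT : T.IsPositive)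
    {l : ℝ} (hl : 0 < l) : IsUnit (T + (l : 𝕜) • 1) := by
  refine isUnit_of_forall_le_norm_inner_map _ (c := ⟨l, hl.le⟩) hl fun x => ?_
  calc ‖x‖ ^ 2 * l ≤ RCLike.re ⟪T x, x⟫_𝕜 + l * ‖x‖ ^ 2 := by
        linarith [hT.re_inner_nonneg_left x]
    _ = RCLike.re ⟪(T + (l : 𝕜) • 1) x, x⟫_𝕜 := by simp [inner_add_left, inner_smul_left]
    _ ≤ ‖⟪(T + (l : 𝕜) • 1) x, x⟫_𝕜‖ := RCLike.re_le_norm _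

variable {𝕜 E F : Type*} [NontriviallyNormedField 𝕜] [NormedAddCommGroup E] [NormedSpace 𝕜 E]
  [NormedAddCommGroup F] [NormedSpace 𝕜 F]

theorem ringInverse_apply_self {A : E →L[𝕜] E} (hA : IsUnit A) (v : E) :
    Ring.inverse A (A v) = v := by
  rw [← comp_apply, ← mul_def, Ring.inverse_mul_cancel A hA, one_apply_eq_self]

theorem ringInverse_apply_of_apply_eq_smul {A : E →L[𝕜] E} (hA : IsUnit A) {v : E} {c : 𝕜}
    (hc : c ≠ 0) (h : A v = c • v) : Ring.inverse A v = c⁻¹ • v := by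
  calc Ring.inverse A v = Ring.inverse A (A (c⁻¹ • v)) := by
        rw [map_smul, h, smul_smul, inv_mul_cancel₀ hc, one_smul]
    _ = c⁻¹ • v := ringInverse_apply_self hA _

theorem ringInverse_comp_sub_smul_one_comp_sub {A : E →L[𝕜] E} (hA : IsUnit A) (c : 𝕜)
    (S : F →L[𝕜] E) : Ring.inverse A ∘L ((A - c • 1) ∘L S) - S = -(c • Ring.inverse A ∘L S) := by
  ext z
  simp [ringInverse_apply_self hA]

end ContinuousLinearMap

theorem stmt2_general
    {HX : Type*} [NormedAddCommGroup HX] [InnerProductSpace ℝ HX] [CompleteSpace HX]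
    {HZ : Type*} [NormedAddCommGroup HZ] [InnerProductSpace ℝ HZ]
    (C : HX →L[ℝ] HX) (hC_pos : C.IsPositive)
    {ι : Type*} (e : HilbertBasis ι ℝ HX) (ν : ι → ℝ) (hν : ∀ k, 0 ≤ ν k)
    (heig : ∀ k, C (e k) = ν k • e k)
    (β : ℝ) (hβ : β ∈ Set.Ioc (0 : ℝ) (1 / 2))
    (Cβ : HX →L[ℝ] HX) (hCβ : ∀ k, Cβ (e k) = (ν k ^ β) • e k)
    (Γ : HZ →L[ℝ] HX) (E : HZ →L[ℝ] HX) (hE : E = Cβ ∘L Γ)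
    (l : ℝ) (hl : 0 < l) :
    ‖Ring.inverse (C + l • (1 : HX →L[ℝ] HX)) ∘L (C ∘L E) - E‖ ≤ l ^ β * ‖Γ‖ := by
  set A := C + l • (1 : HX →L[ℝ] HX)
  have hA : IsUnit A := hC_pos.isUnit_add_smul_one hl
  have hAe (k : ι) : A (e k) = (ν k + l) • e k := by simp [A, heig, add_smul]
  have hD (k : ι) : (l • Ring.inverse A ∘L Cβ) (e k) = (l * ν k ^ β / (ν k + l)) • e k := by
    have hk : ν k + l ≠ 0 := by linarith [hν k]
    simp only [smul_apply, ContinuousLinearMap.comp_apply, hCβ, map_smul,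
      ContinuousLinearMap.ringInverse_apply_of_apply_eq_smul hA hk (hAe k), smul_smul]
    ring_nf
  have hD_norm : ‖l • Ring.inverse A ∘L Cβ‖ ≤ l ^ β := by
    refine e.opNorm_le_of_apply_eq_smul hD (by positivity) fun k => ?_
    rw [abs_of_nonneg (by have := hν k; positivity)]
    exact mul_rpow_div_add_le_rpow (hν k) hl hβ.1.le (by linarith [hβ.2])
  have hC : C = A - l • 1 := (add_sub_cancel_right C _).symm
  calc ‖Ring.inverse A ∘L (C ∘L E) - E‖ = ‖(l • Ring.inverse A ∘L Cβ) ∘L Γ‖ := by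
        rw [hC, ContinuousLinearMap.ringInverse_comp_sub_smul_one_comp_sub hA, norm_neg, hE,
          ContinuousLinearMap.smul_comp, ContinuousLinearMap.comp_assoc]
    _ ≤ l ^ β * ‖Γ‖ := (ContinuousLinearMap.opNorm_comp_le _ _).trans (by gcongr)

/-- Let `H_X`, `H_Z` be separable real Hilbert spaces, `C` a compact, positive,
self-adjoint bounded operator on `H_X` with orthonormal eigensystem `(ν k, e k)` (`e` a Hilbert
basis), `β ∈ (0, 1/2]`, `Γ : H_Z →L H_X` bounded linear, and `E = C^β ∘ Γ`, where `C^β = Cβ` is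
the operator with the same eigenvectors and eigenvalues `ν k ^ β`.  Then for every `λ > 0`,
`‖(C + λI)⁻¹ ∘ C ∘ E − E‖ ≤ λ^β ‖Γ‖` in operator norm. -/
theorem stmt2
    {HX : Type*} [NormedAddCommGroup HX] [InnerProductSpace ℝ HX] [CompleteSpace HX]
    [TopologicalSpace.SeparableSpace HX]
    {HZ : Type*} [NormedAddCommGroup HZ] [InnerProductSpace ℝ HZ] [CompleteSpace HZ]
    [TopologicalSpace.SeparableSpace HZ]
    (C : HX →L[ℝ] HX) (hC_compact : IsCompactOperator C) (hC_pos : C.IsPositive)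
    {ι : Type*} (e : HilbertBasis ι ℝ HX) (ν : ι → ℝ) (hν : ∀ k, 0 ≤ ν k)
    (heig : ∀ k, C (e k) = ν k • e k)
    (β : ℝ) (hβ : β ∈ Set.Ioc (0 : ℝ) (1 / 2))
    (Cβ : HX →L[ℝ] HX) (hCβ : ∀ k, Cβ (e k) = (ν k ^ β) • e k)
    (Γ : HZ →L[ℝ] HX) (E : HZ →L[ℝ] HX) (hE : E = Cβ ∘L Γ)
    (l : ℝ) (hl : 0 < l) :
    ‖Ring.inverse (C + l • (1 : HX →L[ℝ] HX)) ∘L (C ∘L E) - E‖ ≤ l ^ β * ‖Γ‖ :=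
  stmt2_general C hC_pos e ν hν heig β hβ Cβ hCβ Γ E hE l hl
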